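/- arXiv:2007.02377 — 2 statements merged into one kernel-verified Lean document; each statement's English description precedes it below -/
import Mathlib

section
/- The minimum of cost(S) over all bisections S of G is at least 3β+T if and only if there is no pair i,j∈{1,…,n} with i+j≤n and a_i + b_j < c_{i+j}. -/
open Finset

namespace SCLB

inductive V (n : ℕ) : Type
  | u : V n
  | v : V n
  | A : Fin n → V n
  | B : Fin n → V n
  | C : Fin n → V n
  deriving DecidableEq, Fintype

/-- Edges: `(p, some i)` is the `i`-th edge (0-indexed) on path `p` (`p = 0,1,2` for
`P_A, P_B, P_C`), joining the `(i+1)`-st path vertex to the next one; `(p, none)` is the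
special edge `e_A`, `e_B`, `e_C` respectively. -/
abbrev E (n : ℕ) := Fin 3 × Option (Fin n)

def Tsum (n : ℕ) (a b c : Fin n → ℕ) : ℕ := ∑ i, (a i + b i + c i)

def beta (n : ℕ) (a b c : Fin n → ℕ) : ℕ := 4 * Tsum n a b c * n ^ 2

def firstV {n : ℕ} (f : Fin n → V n) (dflt : V n) : V n :=
  if h : 0 < n then f ⟨0, h⟩ else dflt

def nextV {n : ℕ} (f : Fin n → V n) (top : V n) (i : Fin n) : V n :=
  if h : i.val + 1 < n then f ⟨i.val + 1, h⟩ else top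

/-- The two endpoints of each edge. -/
def ends (n : ℕ) : E n → V n × V n
  | (p, none) =>
      if p = 0 then (V.v, firstV V.A V.u)
      else if p = 1 then (V.v, firstV V.B V.u)
      else (V.u, firstV V.C V.v)
  | (p, some i) =>
      if p = 0 then (V.A i, nextV V.A V.u i)
      else if p = 1 then (V.B i, nextV V.B V.u i)
      else (V.C i, nextV V.C V.v i)

/-- Edge costs. -/
def ecost (n : ℕ) (a b c : Fin n → ℕ) : E n → ℚ
  | (_, none) => 1210 * (n : ℚ) ^ 2 * (2 * (beta n a b c : ℚ) + (Tsum n a b c : ℚ))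
  | (p, some i) =>
      if p = 0 then (beta n a b c : ℚ) + (a i : ℚ)
      else if p = 1 then (beta n a b c : ℚ) + (b i : ℚ)
      else (beta n a b c : ℚ) + (Tsum n a b c : ℚ) - (c i : ℚ)

/-- Vertex weights. -/
def wt (n : ℕ) : V n → ℚ
  | V.u => 10 * n
  | V.v => 11 * n
  | _ => 1

/-- The cut of `S`: edges with exactly one endpoint in `S`. -/
def cut (n : ℕ) (S : Finset (V n)) : Finset (E n) :=
  Finset.univ.filter fun e => ¬(((ends n e).1 ∈ S) ↔ ((ends n e).2 ∈ S))

def cutCost (n : ℕ) (a b c : Fin n → ℕ) (S : Finset (V n)) : ℚ :=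
  ∑ e ∈ cut n S, ecost n a b c e

def wOf (n : ℕ) (S : Finset (V n)) : ℚ := ∑ x ∈ S, wt n x

def quotientVal (n : ℕ) (a b c : Fin n → ℕ) (S : Finset (V n)) : ℚ :=
  cutCost n a b c S / min (wOf n S) (wOf n Sᶜ)

def sparsity (n : ℕ) (a b c : Fin n → ℕ) (S : Finset (V n)) : ℚ :=
  cutCost n a b c S / (wOf n S * wOf n Sᶜ)

def IsBisection (n : ℕ) (S : Finset (V n)) : Prop :=
  wOf n S = 12 * n ∧ wOf n Sᶜ = 12 * n

def PA (n : ℕ) : Finset (E n) := Finset.univ.filter fun e => e.1 = 0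
def PB (n : ℕ) : Finset (E n) := Finset.univ.filter fun e => e.1 = 1
def PC (n : ℕ) : Finset (E n) := Finset.univ.filter fun e => e.1 = 2

/-!
Complementing `S` does not change its cut, so we may assume `v ∈ S`; a bisection then avoids `u`.
A cut heavy edge alone costs more than `3β + T`. Otherwise each of the paths `P_A`, `P_B`, `P_C`
runs between `u` and `v`, so it is cut at least once, and a fourth cut edge brings the cost to
`4β ≥ 3β + T`. With exactly one cut edge per path, the `i`-th, `j`-th and `k`-th, the connected
graph determines `S` from its cut, the bisection condition reads `k = i + j + 1`, and the cost is
`3β + T + a_i + b_j - c_{i+j+1}`. The same set gives the converse.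
-/

theorem exists_not_iff_succ (f : ℕ → Prop) {n : ℕ} (h : ¬(f 0 ↔ f n)) :
    ∃ m < n, ¬(f m ↔ f (m + 1)) := by
  induction n with
  | zero => exact absurd Iff.rfl h
  | succ n ih =>
    by_cases hn : f n ↔ f (n + 1)
    · obtain ⟨m, hm, hflip⟩ := ih fun h0 => h (h0.trans hn)
      exact ⟨m, hm.trans n.lt_succ_self, hflip⟩
    · exact ⟨n, n.lt_succ_self, hn⟩

def pathStart (n : ℕ) (p : Fin 3) : V n := ![V.v, V.v, V.u] p

def pathEnd (n : ℕ) (p : Fin 3) : V n := ![V.u, V.u, V.v] p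

/-- Path `p` read from `pathStart n p`: `m < n` gives its `(m+1)`-st internal vertex, `m = n` gives
`pathEnd n p`. -/
def pathVertex (n : ℕ) (p : Fin 3) (m : ℕ) : V n :=
  if h : m < n then ![V.A, V.B, V.C] p ⟨m, h⟩ else pathEnd n p

section Paths
variable {n : ℕ}

theorem ends_none (p : Fin 3) : ends n (p, none) = (pathStart n p, pathVertex n p 0) := by
  fin_cases p <;> rfl

theorem ends_some (p : Fin 3) (i : Fin n) :
    ends n (p, some i) = (pathVertex n p i, pathVertex n p (i + 1)) := by
  fin_cases p <;> simp [ends, pathVertex, nextV, pathEnd]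

theorem pathVertex_self (p : Fin 3) : pathVertex n p n = pathEnd n p := by
  simp [pathVertex]

theorem exists_pathVertex_eq (x : V n) : ∃ p, ∃ m ≤ n, pathVertex n p m = x := by
  cases x with
  | u => exact ⟨0, n, le_rfl, pathVertex_self 0⟩
  | v => exact ⟨2, n, le_rfl, pathVertex_self 2⟩
  | A i => exact ⟨0, i, i.isLt.le, by simp [pathVertex]⟩
  | B i => exact ⟨1, i, i.isLt.le, by simp [pathVertex]⟩
  | C i => exact ⟨2, i, i.isLt.le, by simp [pathVertex]⟩

theorem mem_cut_iff (S : Finset (V n)) (e : E n) :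
    e ∈ cut n S ↔ ¬((ends n e).1 ∈ S ↔ (ends n e).2 ∈ S) := by
  simp [cut]

theorem mem_cut_none (S : Finset (V n)) (p : Fin 3) :
    (p, none) ∈ cut n S ↔ ¬(pathStart n p ∈ S ↔ pathVertex n p 0 ∈ S) := by
  rw [mem_cut_iff, ends_none]

theorem mem_cut_some (S : Finset (V n)) (p : Fin 3) (i : Fin n) :
    (p, some i) ∈ cut n S ↔ ¬(pathVertex n p i ∈ S ↔ pathVertex n p (i + 1) ∈ S) := by
  rw [mem_cut_iff, ends_some]

theorem cut_compl (S : Finset (V n)) : cut n Sᶜ = cut n S := by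
  ext e
  simp only [mem_cut_iff, mem_compl]
  tauto

end Paths

section Connected
variable {n : ℕ} {S T : Finset (V n)}

theorem pathVertex_mem_iff_of_cut_eq (h : cut n S = cut n T) (p : Fin 3)
    (hstart : pathStart n p ∈ S ↔ pathStart n p ∈ T) :
    ∀ m ≤ n, (pathVertex n p m ∈ S ↔ pathVertex n p m ∈ T) := by
  intro m hm
  induction m with
  | zero =>
    have := mem_cut_none S p
    rw [h, mem_cut_none] at this
    tauto
  | succ m ih =>
    have := mem_cut_some S p ⟨m, hm⟩
    rw [h, mem_cut_some] at this
    have := ih (by omega)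
    tauto

theorem eq_of_cut_eq (h : cut n S = cut n T) (hv : V.v ∈ S ↔ V.v ∈ T) : S = T := by
  have hu : V.u ∈ S ↔ V.u ∈ T := by
    simpa [pathVertex_self, pathEnd] using pathVertex_mem_iff_of_cut_eq h 0 hv n le_rfl
  ext x
  obtain ⟨p, m, hm, rfl⟩ := exists_pathVertex_eq x
  exact pathVertex_mem_iff_of_cut_eq h p (by fin_cases p <;> assumption) m hm

end Connected

section Weights
variable {n : ℕ}

@[simps]
def embA (n : ℕ) : Fin n ↪ V n := ⟨V.A, fun _ _ => V.A.inj⟩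
@[simps]
def embB (n : ℕ) : Fin n ↪ V n := ⟨V.B, fun _ _ => V.B.inj⟩
@[simps]
def embC (n : ℕ) : Fin n ↪ V n := ⟨V.C, fun _ _ => V.C.inj⟩

theorem wOf_insert_v_union_map (X Y Z : Finset (Fin n)) :
    wOf n (insert V.v (X.map (embA n) ∪ Y.map (embB n) ∪ Z.map (embC n))) =
      11 * n + #X + #Y + #Z := by
  rw [wOf, sum_insert (by simp), sum_union, sum_union]
  · simp [wt]
    ring
  all_goals simp only [disjoint_left, mem_union, mem_map, embA_apply, embB_apply, embC_apply]; grind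

theorem univ_eq_insert_u :
    (univ : Finset (V n)) =
      insert V.u (insert V.v (univ.map (embA n) ∪ univ.map (embB n) ∪ univ.map (embC n))) := by
  refine (eq_univ_of_forall fun x => ?_).symm
  cases x <;> simp

theorem wOf_add_wOf_compl (S : Finset (V n)) : wOf n S + wOf n Sᶜ = 24 * n := by
  rw [wOf, wOf, sum_add_sum_compl, ← wOf, univ_eq_insert_u, wOf, sum_insert (by simp),
    ← wOf, wOf_insert_v_union_map]
  simp [wt]
  ring

theorem isBisection_iff (S : Finset (V n)) : IsBisection n S ↔ wOf n S = 12 * n := by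
  have := wOf_add_wOf_compl S
  exact ⟨And.left, fun h => ⟨h, by linarith⟩⟩

end Weights

def threeCutSet (n : ℕ) (i j k : Fin n) : Finset (V n) :=
  insert V.v ((Iic i).map (embA n) ∪ (Iic j).map (embB n) ∪ (Ioi k).map (embC n))

section ThreeCut
variable {n : ℕ} (i j k : Fin n)

theorem wOf_threeCutSet : wOf n (threeCutSet n i j k) + k = 12 * n + i + j + 1 := by
  have hk : ((n - 1 - k : ℕ) : ℚ) + k + 1 = n := by
    exact_mod_cast (by omega : n - 1 - k + (k : ℕ) + 1 = n)
  rw [threeCutSet, wOf_insert_v_union_map, Fin.card_Iic, Fin.card_Iic, Fin.card_Ioi]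
  push_cast
  linear_combination hk

theorem isBisection_threeCutSet_iff :
    IsBisection n (threeCutSet n i j k) ↔ (k : ℕ) = i + j + 1 := by
  have := wOf_threeCutSet i j k
  rw [isBisection_iff]
  constructor
  · intro h
    exact_mod_cast (by linarith : (k : ℚ) = i + j + 1)
  · intro h
    rw [h] at this
    push_cast at this
    linarith

theorem pathVertex_mem_threeCutSet {m : ℕ} (hm : m ≤ n) :
    (pathVertex n 0 m ∈ threeCutSet n i j k ↔ m ≤ i) ∧
    (pathVertex n 1 m ∈ threeCutSet n i j k ↔ m ≤ j) ∧
    (pathVertex n 2 m ∈ threeCutSet n i j k ↔ k < m) := by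
  unfold pathVertex
  split_ifs with h
  · simp only [threeCutSet, Matrix.cons_val, mem_insert, mem_union, mem_map, embA_apply,
      embB_apply, embC_apply, V.A.injEq, V.B.injEq, V.C.injEq, reduceCtorEq, exists_eq_right,
      mem_Iic, mem_Ioi, false_or, or_false, exists_false, and_false]
    exact ⟨Iff.rfl, Iff.rfl, Iff.rfl⟩
  · simp [threeCutSet, pathEnd]
    omega

theorem cut_threeCutSet :
    cut n (threeCutSet n i j k) = {(0, some i), (1, some j), (2, some k)} := by
  ext ⟨p, e⟩
  obtain rfl | rfl | rfl : p = 0 ∨ p = 1 ∨ p = 2 := by omega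
  all_goals cases e with
  | none =>
    have := pathVertex_mem_threeCutSet i j k (Nat.zero_le n)
    simp only [mem_cut_none, this]
    simp [pathStart, threeCutSet]
  | some m =>
    have h₀ := pathVertex_mem_threeCutSet i j k m.isLt.le
    have h₁ := pathVertex_mem_threeCutSet i j k m.isLt
    simp [mem_cut_some, h₀, h₁, Fin.ext_iff]
    omega

theorem cutCost_threeCutSet (a b c : Fin n → ℕ) :
    cutCost n a b c (threeCutSet n i j k) = 3 * beta n a b c + Tsum n a b c + a i + b j - c k := by
  rw [cutCost, cut_threeCutSet, sum_insert (by simp), sum_insert (by simp), sum_singleton]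
  simp [ecost]
  ring

end ThreeCut

section Costs
variable {n : ℕ} (a b c : Fin n → ℕ)

theorem Tsum_le_beta (hn : 0 < n) : (Tsum n a b c : ℚ) ≤ beta n a b c := by
  have : 1 ≤ n ^ 2 := Nat.one_le_pow _ _ hn
  exact_mod_cast (by unfold beta; nlinarith : Tsum n a b c ≤ beta n a b c)

theorem three_beta_add_Tsum_le_ecost_none (hn : 0 < n) (p : Fin 3) :
    3 * (beta n a b c : ℚ) + Tsum n a b c ≤ ecost n a b c (p, none) := by
  have : (1 : ℚ) ≤ (n : ℚ) ^ 2 := one_le_pow₀ (by exact_mod_cast hn)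
  have := Tsum_le_beta a b c hn
  simp only [ecost]
  nlinarith

theorem beta_le_ecost (hn : 0 < n) (e : E n) : (beta n a b c : ℚ) ≤ ecost n a b c e := by
  obtain ⟨p, _ | i⟩ := e
  · linarith [three_beta_add_Tsum_le_ecost_none a b c hn p, Tsum_le_beta a b c hn]
  · have : c i ≤ Tsum n a b c :=
      le_trans (by omega) (single_le_sum (f := fun i => a i + b i + c i) (by simp) (mem_univ i))
    have : (c i : ℚ) ≤ Tsum n a b c := by exact_mod_cast this
    simp only [ecost]
    split_ifs <;> linarith [(a i).cast_nonneg (α := ℚ), (b i).cast_nonneg (α := ℚ)]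

theorem card_mul_beta_le_cutCost (hn : 0 < n) (S : Finset (V n)) :
    #(cut n S) * (beta n a b c : ℚ) ≤ cutCost n a b c S := by
  rw [← nsmul_eq_mul]
  exact card_nsmul_le_sum _ _ _ fun e _ => beta_le_ecost a b c hn e

end Costs

section LowerBound
variable {n : ℕ} {S : Finset (V n)}

theorem u_notMem_of_isBisection (hn : 0 < n) (hS : IsBisection n S) (hv : V.v ∈ S) :
    V.u ∉ S := by
  intro hu
  have := sum_le_sum_of_subset_of_nonneg (f := wt n) (insert_subset hu (singleton_subset_iff.2 hv))
    fun x _ _ => by cases x <;> simp [wt]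
  rw [sum_pair (by simp), ← wOf, hS.1] at this
  simp only [wt] at this
  have : (0 : ℚ) < n := by exact_mod_cast hn
  linarith

theorem exists_mem_cut_some (hu : V.u ∉ S) (hv : V.v ∈ S) (hnone : ∀ p, (p, none) ∉ cut n S)
    (p : Fin 3) : ∃ k : Fin n, (p, some k) ∈ cut n S := by
  have hstart : pathVertex n p 0 ∈ S ↔ pathStart n p ∈ S := by
    simpa [mem_cut_none, Iff.comm] using hnone p
  have hends : ¬(pathStart n p ∈ S ↔ pathEnd n p ∈ S) := by
    fin_cases p <;> simp [pathStart, pathEnd, hu, hv]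
  have hpath : ¬(pathVertex n p 0 ∈ S ↔ pathVertex n p n ∈ S) := by
    rwa [hstart, pathVertex_self]
  obtain ⟨m, hm, hflip⟩ := exists_not_iff_succ (fun m => pathVertex n p m ∈ S) hpath
  exact ⟨⟨m, hm⟩, (mem_cut_some S p ⟨m, hm⟩).2 hflip⟩

theorem three_beta_add_Tsum_le_cutCost_of_v_mem (hn : 0 < n) (a b c : Fin n → ℕ)
    (hno : ¬ ∃ i j : Fin n, ∃ h : i.val + j.val + 1 < n,
      a i + b j < c ⟨i.val + j.val + 1, h⟩)
    (hS : IsBisection n S) (hv : V.v ∈ S) :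
    3 * (beta n a b c : ℚ) + Tsum n a b c ≤ cutCost n a b c S := by
  by_cases hnone : ∃ p, (p, none) ∈ cut n S
  · obtain ⟨p, hp⟩ := hnone
    exact (three_beta_add_Tsum_le_ecost_none a b c hn p).trans
      (single_le_sum (fun e _ => (beta n a b c).cast_nonneg.trans (beta_le_ecost a b c hn e)) hp)
  push Not at hnone
  choose k hk using exists_mem_cut_some (u_notMem_of_isBisection hn hS hv) hv hnone
  have hsub : cut n (threeCutSet n (k 0) (k 1) (k 2)) ⊆ cut n S := by
    simp [cut_threeCutSet, insert_subset_iff, hk]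
  by_cases hcut : cut n S ⊆ cut n (threeCutSet n (k 0) (k 1) (k 2))
  · obtain rfl : S = threeCutSet n (k 0) (k 1) (k 2) :=
      eq_of_cut_eq (hcut.antisymm hsub) (by simp [hv, threeCutSet])
    have hk2 := (isBisection_threeCutSet_iff _ _ _).1 hS
    have hlt : k 0 + k 1 + 1 < n := hk2 ▸ (k 2).isLt
    obtain hk2 : k 2 = ⟨_, hlt⟩ := Fin.ext hk2
    have : (c (k 2) : ℚ) ≤ a (k 0) + b (k 1) := by
      exact_mod_cast not_lt.1 fun h => hno ⟨k 0, k 1, hlt, by rwa [← hk2]⟩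
    rw [cutCost_threeCutSet]
    linarith
  · have h4 : 4 ≤ #(cut n S) := by
      obtain ⟨e, he, he'⟩ := not_subset.1 hcut
      calc 4 = #(insert e (cut n (threeCutSet n (k 0) (k 1) (k 2)))) := by
            rw [card_insert_of_notMem he', cut_threeCutSet]; simp
        _ ≤ #(cut n S) := card_le_card (insert_subset he hsub)
    have := card_mul_beta_le_cutCost a b c hn S
    have : (4 : ℚ) ≤ #(cut n S) := by exact_mod_cast h4
    nlinarith [Tsum_le_beta a b c hn, (beta n a b c).cast_nonneg (α := ℚ)]

end LowerBound

theorem min_bisection_iff_convolution_general (n : ℕ) (hn : 1 < n) (a b c : Fin n → ℕ) :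
    (∀ S : Finset (V n), IsBisection n S →
      3 * (beta n a b c : ℚ) + (Tsum n a b c : ℚ) ≤ cutCost n a b c S)
    ↔ ¬ ∃ i j : Fin n, ∃ h : i.val + j.val + 1 < n,
        a i + b j < c ⟨i.val + j.val + 1, h⟩ := by
  constructor
  · rintro hall ⟨i, j, hij, hlt⟩
    have := hall _ ((isBisection_threeCutSet_iff i j ⟨_, hij⟩).2 rfl)
    rw [cutCost_threeCutSet] at this
    have : (a i + b j : ℚ) < c ⟨_, hij⟩ := by exact_mod_cast hlt
    linarith
  · intro hno S hS
    by_cases hv : V.v ∈ S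
    · exact three_beta_add_Tsum_le_cutCost_of_v_mem (by omega) a b c hno hS hv
    · rw [cutCost, ← cut_compl, ← cutCost]
      exact three_beta_add_Tsum_le_cutCost_of_v_mem (by omega) a b c hno
        ⟨hS.2, (compl_compl S).symm ▸ hS.1⟩ (mem_compl.2 hv)

/-- The minimum bisection cost is at least `3β + T` iff there is no pair `i, j` (1-indexed)
with `i + j ≤ n` and `a_i + b_j < c_{i+j}`. -/
theorem min_bisection_iff_convolution (n : ℕ) (hn : 1 < n) (a b c : Fin n → ℕ)
    (ha : ∀ i, 0 < a i) (hb : ∀ i, 0 < b i) (hc : ∀ i, 0 < c i) :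
    (∀ S : Finset (V n), IsBisection n S →
      3 * (beta n a b c : ℚ) + (Tsum n a b c : ℚ) ≤ cutCost n a b c S)
    ↔ ¬ ∃ i j : Fin n, ∃ h : i.val + j.val + 1 < n,
        a i + b j < c ⟨i.val + j.val + 1, h⟩ :=
  min_bisection_iff_convolution_general n hn a b c

end SCLB
end

section
/- There exist indices a≠b in {1,…,n} such that v_a and v_b are orthogonal if and only if the minimum of Max-Dist(S_a,S_b) over all pairs a≠b is at most (2d+1)·M + 1. -/
/-!
Every vertex of `S_k` is adjacent exactly to the two hubs `ℓ` and `r`, and its two edge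
weights add up to `(2d+1)·M + 2·v_k[j]`, more than any single edge weighs. So a shortest path
between two such vertices goes through a single hub, and
`d(x, y) = min (w(x,ℓ) + w(y,ℓ)) (w(x,r) + w(y,r))`. For `x = u_{a,i}`, `y = u'_{b,j}` the two
sums are `(2d+1 ± (i - j))·M` plus `v_a[i] + v_b[j]`, so the distance exceeds `(2d+1)·M + 1`
exactly when `i = j` and `v_a[i] = v_b[i] = 1`; the pairs `u, u` and `u', u'` are cheaper still
through `ℓ`, resp. `r`.
-/

open Finset

namespace OVGadget

inductive V (n d : ℕ) : Type
  | U : Fin n → Fin d → V n d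
  | U' : Fin n → Fin d → V n d
  | l : V n d
  | r : V n d
  deriving DecidableEq, Fintype

def M : ℕ := 4

/-- One-directional edge-weight table encoding the vectors `v_1, …, v_n`; a value `0` means
"no edge".  Here `j : Fin d` is 0-indexed, so `U k j` is the paper's `u_{k+1, j+1}`, whence
the weights `(j+1)·M + v_k[j]` and `(2d+1−(j+1))·M + v_k[j] = (2d−j)·M + v_k[j]`. -/
def wt0 (n d : ℕ) (v : Fin n → Fin d → Fin 2) : V n d → V n d → ℕ
  | V.U k j, V.l => (j.val + 1) * M + (v k j).val
  | V.U' k j, V.l => (2 * d - j.val) * M + (v k j).val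
  | V.U k j, V.r => (2 * d - j.val) * M + (v k j).val
  | V.U' k j, V.r => (j.val + 1) * M + (v k j).val
  | _, _ => 0

/-- The symmetrized edge weight. -/
def wtE (n d : ℕ) (v : Fin n → Fin d → Fin 2) (x y : V n d) : ℕ :=
  wt0 n d v x y + wt0 n d v y x

/-- The graph `G`: `x` and `y` are adjacent iff the weight table records an edge. -/
def G (n d : ℕ) (v : Fin n → Fin d → Fin 2) : SimpleGraph (V n d) :=
  SimpleGraph.fromRel fun x y => wt0 n d v x y ≠ 0

/-- The total weight of a walk. -/
def wWeight {n d : ℕ} {v : Fin n → Fin d → Fin 2} {x y : V n d}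
    (p : (G n d v).Walk x y) : ℕ :=
  (p.darts.map fun e => wtE n d v e.toProd.1 e.toProd.2).sum

/-- The weighted shortest-path distance: the minimum over paths from `x` to `y` of the sum
of the edge weights along the path. -/
noncomputable def dist (n d : ℕ) (v : Fin n → Fin d → Fin 2) (x y : V n d) : ℕ :=
  sInf {m | ∃ p : (G n d v).Walk x y, p.IsPath ∧ wWeight p = m}

/-- Membership in the set `S_k = {u_{k,j}, u'_{k,j} : j}`. -/
def inS (n d : ℕ) (k : Fin n) (x : V n d) : Prop :=
  (∃ j : Fin d, x = V.U k j) ∨ (∃ j : Fin d, x = V.U' k j)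

/-- The set `S_k` as a finite set of vertices. -/
def SF (n d : ℕ) (k : Fin n) : Finset (V n d) :=
  (Finset.univ.image fun j : Fin d => V.U k j)
    ∪ (Finset.univ.image fun j : Fin d => V.U' k j)

/-- `Max-Dist(S_a, S_b) = max_{x ∈ S_a, y ∈ S_b} d(x, y)`. -/
noncomputable def maxDist (n d : ℕ) (v : Fin n → Fin d → Fin 2) (a b : Fin n) : ℕ :=
  (SF n d a ×ˢ SF n d b).sup fun p => dist n d v p.1 p.2

def IsHub {n d : ℕ} (x : V n d) : Prop :=
  x = V.l ∨ x = V.r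

section Gadget

variable {n d : ℕ} {v : Fin n → Fin d → Fin 2}

@[simp]
lemma wtE_U_l (k : Fin n) (j : Fin d) : wtE n d v (V.U k j) V.l = (j + 1) * M + v k j := by
  simp [wtE, wt0]

@[simp]
lemma wtE_U_r (k : Fin n) (j : Fin d) : wtE n d v (V.U k j) V.r = (2 * d - j) * M + v k j := by
  simp [wtE, wt0]

@[simp]
lemma wtE_U'_l (k : Fin n) (j : Fin d) : wtE n d v (V.U' k j) V.l = (2 * d - j) * M + v k j := by
  simp [wtE, wt0]

@[simp]
lemma wtE_U'_r (k : Fin n) (j : Fin d) : wtE n d v (V.U' k j) V.r = (j + 1) * M + v k j := by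
  simp [wtE, wt0]

lemma wtE_comm (x y : V n d) : wtE n d v x y = wtE n d v y x :=
  Nat.add_comm _ _

lemma adj_iff_isHub_iff_not_isHub {x y : V n d} :
    (G n d v).Adj x y ↔ (IsHub x ↔ ¬IsHub y) := by
  rcases x with ⟨k, j⟩ | ⟨k, j⟩ | _ | _ <;> rcases y with ⟨k', j'⟩ | ⟨k', j'⟩ | _ | _ <;>
    simp [G, wt0, IsHub, M] <;> omega

lemma isHub_of_adj {x c : V n d} (hx : ¬IsHub x) (h : (G n d v).Adj x c) : IsHub c := by
  by_contra hc
  exact hx (adj_iff_isHub_iff_not_isHub.1 h |>.2 hc)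

lemma not_isHub_of_adj {c z : V n d} (hc : IsHub c) (h : (G n d v).Adj c z) : ¬IsHub z :=
  adj_iff_isHub_iff_not_isHub.1 h |>.1 hc

lemma not_adj_of_not_isHub {x y : V n d} (hx : ¬IsHub x) (hy : ¬IsHub y) :
    ¬(G n d v).Adj x y :=
  fun h => hy (isHub_of_adj hx h)

lemma wtE_hub_le {x c : V n d} (hx : ¬IsHub x) (hc : IsHub c) :
    wtE n d v x c ≤ 2 * d * M + 1 := by
  rcases x with ⟨k, j⟩ | ⟨k, j⟩ | _ | _ <;> rcases hc with rfl | rfl <;>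
    simp_all [IsHub, M] <;> omega

lemma wtE_l_add_wtE_r {x : V n d} (hx : ¬IsHub x) :
    (2 * d + 1) * M ≤ wtE n d v x V.l + wtE n d v x V.r := by
  rcases x with ⟨k, j⟩ | ⟨k, j⟩ | _ | _ <;> simp_all [IsHub, M] <;> omega

@[simp]
lemma wWeight_nil {x : V n d} : wWeight (SimpleGraph.Walk.nil : (G n d v).Walk x x) = 0 := rfl

@[simp]
lemma wWeight_cons {x c y : V n d} (h : (G n d v).Adj x c) (p : (G n d v).Walk c y) :
    wWeight (.cons h p) = wtE n d v x c + wWeight p := by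
  simp [wWeight]

/-- A path between two non-hub vertices is `x - c - y` or `x - c - z - c' - y` with `c ≠ c'`;
in the second case the detour through `z` outweighs the edge `y - c`. -/
lemma min_le_wWeight {x y : V n d} (hx : ¬IsHub x) (hy : ¬IsHub y) (hxy : x ≠ y)
    (p : (G n d v).Walk x y) (hp : p.IsPath) :
    min (wtE n d v x V.l + wtE n d v y V.l) (wtE n d v x V.r + wtE n d v y V.r) ≤ wWeight p := by
  match p, hp with
  | .nil, _ => exact absurd rfl hxy
  | .cons h .nil, _ => exact absurd h (not_adj_of_not_isHub hx hy)
  | .cons (v := c) hxc (.cons hcy .nil), _ =>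
    rcases isHub_of_adj hx hxc with rfl | rfl <;> simp [wtE_comm _ y]
  | .cons hxc (.cons hcz (.cons hzy .nil)), _ =>
    exact absurd hzy (not_adj_of_not_isHub (not_isHub_of_adj (isHub_of_adj hx hxc) hcz) hy)
  | .cons (v := c) hxc (.cons (v := z) hcz (.cons (v := c') hzc' (.cons hc'y .nil))), hp =>
    have hz := not_isHub_of_adj (isHub_of_adj hx hxc) hcz
    have hzlr := wtE_l_add_wtE_r (v := v) hz
    have hyl := wtE_hub_le (v := v) hy (Or.inl rfl)
    have hyr := wtE_hub_le (v := v) hy (Or.inr rfl)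
    simp only [SimpleGraph.Walk.cons_isPath_iff, SimpleGraph.Walk.support_cons,
      SimpleGraph.Walk.support_nil, List.mem_cons, List.not_mem_nil] at hp
    rcases isHub_of_adj hx hxc with rfl | rfl <;> rcases isHub_of_adj hz hzc' with rfl | rfl <;>
      simp_all [wtE_comm _ z, wtE_comm _ y, M] <;> omega
  | .cons (v := c) hxc (.cons hcz (.cons (v := c') hzc' (.cons hc'z' (.cons (v := c'') hz'c'' _)))),
    hp =>
    have hz := not_isHub_of_adj (isHub_of_adj hx hxc) hcz
    have hz' := not_isHub_of_adj (isHub_of_adj hz hzc') hc'z'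
    simp only [SimpleGraph.Walk.cons_isPath_iff, SimpleGraph.Walk.support_cons,
      List.mem_cons] at hp
    rcases isHub_of_adj hx hxc with rfl | rfl <;> rcases isHub_of_adj hz hzc' with rfl | rfl <;>
      rcases isHub_of_adj hz' hz'c'' with rfl | rfl <;> simp_all

lemma dist_le_wWeight {x y : V n d} (p : (G n d v).Walk x y) (hp : p.IsPath) :
    dist n d v x y ≤ wWeight p :=
  Nat.sInf_le ⟨p, hp, rfl⟩

lemma dist_eq_min {x y : V n d} (hx : ¬IsHub x) (hy : ¬IsHub y) (hxy : x ≠ y) :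
    dist n d v x y =
      min (wtE n d v x V.l + wtE n d v y V.l) (wtE n d v x V.r + wtE n d v y V.r) := by
  have via {c : V n d} (hc : IsHub c) :
      ∃ p : (G n d v).Walk x y, p.IsPath ∧ wWeight p = wtE n d v x c + wtE n d v y c := by
    have hxc : (G n d v).Adj x c := adj_iff_isHub_iff_not_isHub.2 (iff_of_false hx (not_not.2 hc))
    have hcy : (G n d v).Adj c y := adj_iff_isHub_iff_not_isHub.2 (iff_of_true hc hy)
    exact ⟨.cons hxc (.cons hcy .nil),
      by simp [SimpleGraph.Walk.cons_isPath_iff, hxc.ne, hcy.ne, hxy], by simp [wtE_comm c]⟩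
  obtain ⟨pl, hpl, hwl⟩ := via (Or.inl rfl)
  obtain ⟨pr, hpr, hwr⟩ := via (Or.inr rfl)
  obtain ⟨p, hp, hw⟩ :=
    Nat.sInf_mem (s := {m | ∃ p : (G n d v).Walk x y, p.IsPath ∧ wWeight p = m}) ⟨_, pl, hpl, rfl⟩
  refine le_antisymm (le_min ?_ ?_) ?_
  · exact hwl ▸ dist_le_wWeight pl hpl
  · exact hwr ▸ dist_le_wWeight pr hpr
  · rw [dist, ← hw]
    exact min_le_wWeight hx hy hxy p hp

lemma maxDist_le_iff {a b : Fin n} (hab : a ≠ b) :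
    maxDist n d v a b ≤ (2 * d + 1) * M + 1 ↔ ∀ i, (v a i).val + (v b i).val ≤ 1 := by
  simp only [maxDist, Finset.sup_le_iff, Finset.mem_product, SF, Finset.mem_union,
    Finset.mem_image, Finset.mem_univ, true_and, and_imp, Prod.forall]
  constructor
  · intro h i
    have := h _ _ (.inl ⟨i, rfl⟩) (.inr ⟨i, rfl⟩)
    rw [dist_eq_min (by simp [IsHub]) (by simp [IsHub]) (by simp)] at this
    simp only [wtE_U_l, wtE_U'_l, wtE_U_r, wtE_U'_r, M] at this
    have := i.isLt
    omega
  · rintro horth _ _ (⟨i, rfl⟩ | ⟨i, rfl⟩) (⟨j, rfl⟩ | ⟨j, rfl⟩) <;>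
      rw [dist_eq_min (by simp [IsHub]) (by simp [IsHub]) (by simp [hab])] <;>
      simp only [wtE_U_l, wtE_U'_l, wtE_U_r, wtE_U'_r, M]
    all_goals
      have := (v a i).isLt; have := (v b j).isLt; have := i.isLt; have := j.isLt
      rcases eq_or_ne i j with rfl | hij
      · have := horth i; omega
      · have := Fin.val_ne_of_ne hij; omega

end Gadget

lemma fin_two_val_mul_eq_zero_iff (x y : Fin 2) : x.val * y.val = 0 ↔ x.val + y.val ≤ 1 := by
  revert x y
  decide

theorem orthogonal_iff_maxDist_general (n d : ℕ)
    (v : Fin n → Fin d → Fin 2) :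
    (∃ a b : Fin n, a ≠ b ∧ ∀ i : Fin d, (v a i).val * (v b i).val = 0)
    ↔ (∃ a b : Fin n, a ≠ b ∧ maxDist n d v a b ≤ (2 * d + 1) * M + 1) := by
  simp only [fin_two_val_mul_eq_zero_iff]
  exact exists₂_congr fun a b => and_congr_right fun hab => (maxDist_le_iff hab).symm

/-- There is an orthogonal pair of vectors iff the minimum of `Max-Dist` over all pairs
`a ≠ b` is at most `(2d+1)·M + 1`. -/
theorem orthogonal_iff_maxDist (n d : ℕ) (hn : 2 ≤ n) (hd : 1 ≤ d)
    (v : Fin n → Fin d → Fin 2) :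
    (∃ a b : Fin n, a ≠ b ∧ ∀ i : Fin d, (v a i).val * (v b i).val = 0)
    ↔ (∃ a b : Fin n, a ≠ b ∧ maxDist n d v a b ≤ (2 * d + 1) * M + 1) :=
  orthogonal_iff_maxDist_general n d v

end OVGadget
end
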